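/- Idealized estimator error bound: Let Ā be p×p symmetric PSD with top eigenvalue λ, unit top eigenvector x̄ ∈ K, second eigenvalue μ, eigengap ν = λ - μ > 0. Let A = Ā + E, and let v maximize u^T A u over u ∈ K ∩ S^{p-1} for a convex cone K. If v^T x̄ ≥ 0, then ‖v - x̄‖ ≤ min( sqrt(4‖E‖_K/ν), 8‖E‖_{T_K(x̄)}/ν ). -/

import Mathlib

open Matrix

/-- Euclidean norm of a vector in `Fin p → ℝ`. -/
noncomputable def vecEnorm {p : ℕ} (v : Fin p → ℝ) : ℝ := Real.sqrt (v ⬝ᵥ v)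

/-- The cone-restricted operator seminorm
`‖E‖_C = sup_{x,y ∈ C, ‖x‖=‖y‖=1} |xᵀ E y|`. -/
noncomputable def coneNorm {p : ℕ} (C : Set (Fin p → ℝ)) (E : Matrix (Fin p) (Fin p) ℝ) : ℝ :=
  sSup {r : ℝ | ∃ x ∈ C, ∃ y ∈ C, vecEnorm x = 1 ∧ vecEnorm y = 1 ∧ r = |x ⬝ᵥ E.mulVec y|}

/-- The tangent cone of `K` at `x̄`: `T_K(x̄) = {t (w - x̄) : t ≥ 0, w ∈ K}`. -/
def tangentCone {p : ℕ} (K : Set (Fin p → ℝ)) (xbar : Fin p → ℝ) : Set (Fin p → ℝ) :=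
  {w | ∃ t : ℝ, 0 ≤ t ∧ ∃ u ∈ K, w = t • (u - xbar)}

/-!
Compare the objective at `v` and at `x̄`. Optimality of `v` gives
`x̄ᵀĀx̄ - vᵀĀv ≤ vᵀEv - x̄ᵀEx̄`, while the eigengap gives
`x̄ᵀĀx̄ - vᵀĀv ≥ ν (1 - (vᵀx̄)²) ≥ (ν/2) ‖v - x̄‖²` (the last step uses `vᵀx̄ ≥ 0`).
The right-hand side is at most `2 ‖E‖_K`; writing it as `dᵀEd + dᵀEx̄ + x̄ᵀEd` with
`d = v - x̄ ∈ T_K(x̄)`, it is also at most `4 ‖d‖ ‖E‖_{T_K(x̄)}`, since `‖d‖ ≤ 2`.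
-/

section DotProduct

variable {n : Type*} [Fintype n]

lemma smul_dotProduct_mulVec_smul {R : Type*} [CommRing R] (E : Matrix n n R) (s t : R)
    (a b : n → R) : (s • a) ⬝ᵥ E *ᵥ (t • b) = s * t * (a ⬝ᵥ E *ᵥ b) := by
  simp only [mulVec_smul, smul_dotProduct, dotProduct_smul, smul_eq_mul]
  ring

lemma Matrix.IsSymm.dotProduct_mulVec_comm {R : Type*} [CommRing R] {A : Matrix n n R}
    (hA : A.IsSymm) (x y : n → R) : x ⬝ᵥ A *ᵥ y = y ⬝ᵥ A *ᵥ x := by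
  rw [dotProduct_mulVec, ← hA.eq, vecMul_transpose, dotProduct_comm, hA.eq]

lemma dotProduct_self_nonneg (v : n → ℝ) : 0 ≤ v ⬝ᵥ v :=
  Fintype.sum_nonneg fun i => mul_self_nonneg (v i)

end DotProduct

section VecEnorm

variable {p : ℕ}

lemma vecEnorm_nonneg (v : Fin p → ℝ) : 0 ≤ vecEnorm v := Real.sqrt_nonneg _

lemma vecEnorm_sq (v : Fin p → ℝ) : vecEnorm v ^ 2 = v ⬝ᵥ v :=
  Real.sq_sqrt (dotProduct_self_nonneg v)

lemma dotProduct_self_eq_one {v : Fin p → ℝ} (hv : vecEnorm v = 1) : v ⬝ᵥ v = 1 := by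
  rw [← vecEnorm_sq, hv, one_pow]

lemma vecEnorm_smul_of_nonneg {t : ℝ} (ht : 0 ≤ t) (v : Fin p → ℝ) :
    vecEnorm (t • v) = t * vecEnorm v := by
  rw [vecEnorm, smul_dotProduct, dotProduct_smul, smul_eq_mul, smul_eq_mul, ← mul_assoc,
    Real.sqrt_mul (mul_self_nonneg t), Real.sqrt_mul_self ht, vecEnorm]

@[simp]
lemma vecEnorm_zero : vecEnorm (0 : Fin p → ℝ) = 0 := by
  simp [vecEnorm]

lemma vecEnorm_pos {v : Fin p → ℝ} (hv : v ≠ 0) : 0 < vecEnorm v :=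
  Real.sqrt_pos.2 <| (dotProduct_self_nonneg v).lt_of_ne' (dotProduct_self_eq_zero.not.2 hv)

lemma vecEnorm_inv_smul_self {v : Fin p → ℝ} (hv : v ≠ 0) : vecEnorm ((vecEnorm v)⁻¹ • v) = 1 := by
  rw [vecEnorm_smul_of_nonneg (inv_nonneg.2 (vecEnorm_nonneg v)),
    inv_mul_cancel₀ (vecEnorm_pos hv).ne']

lemma vecEnorm_smul_inv_smul_self (v : Fin p → ℝ) : vecEnorm v • ((vecEnorm v)⁻¹ • v) = v := by
  rcases eq_or_ne v 0 with rfl | hv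
  · simp
  · exact smul_inv_smul₀ (vecEnorm_pos hv).ne' v

lemma abs_apply_le_one {v : Fin p → ℝ} (hv : vecEnorm v = 1) (i : Fin p) : |v i| ≤ 1 := by
  have hi : v i * v i ≤ v ⬝ᵥ v :=
    Finset.single_le_sum (f := fun j => v j * v j) (fun j _ => mul_self_nonneg (v j))
      (Finset.mem_univ i)
  rwa [dotProduct_self_eq_one hv, ← sq, sq_le_one_iff_abs_le_one] at hi

lemma vecEnorm_sub_sq {v x : Fin p → ℝ} (hv : vecEnorm v = 1) (hx : vecEnorm x = 1) :
    vecEnorm (v - x) ^ 2 = 2 - 2 * (v ⬝ᵥ x) := by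
  rw [vecEnorm_sq, sub_dotProduct, dotProduct_sub, dotProduct_sub, dotProduct_self_eq_one hv,
    dotProduct_self_eq_one hx, dotProduct_comm x v]
  ring

lemma vecEnorm_sub_sq_le {v x : Fin p → ℝ} (hv : vecEnorm v = 1) (hx : vecEnorm x = 1)
    (hvx : 0 ≤ v ⬝ᵥ x) : vecEnorm (v - x) ^ 2 ≤ 2 * (1 - (v ⬝ᵥ x) ^ 2) := by
  have h := vecEnorm_sub_sq hv hx
  have hvx1 : v ⬝ᵥ x ≤ 1 := by nlinarith [sq_nonneg (vecEnorm (v - x))]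
  rw [h]
  nlinarith

end VecEnorm

section ConeNorm

variable {p : ℕ}

lemma bddAbove_coneNorm_set (C : Set (Fin p → ℝ)) (E : Matrix (Fin p) (Fin p) ℝ) :
    BddAbove {r : ℝ | ∃ x ∈ C, ∃ y ∈ C, vecEnorm x = 1 ∧ vecEnorm y = 1 ∧
      r = |x ⬝ᵥ E *ᵥ y|} := by
  refine ⟨∑ i, ∑ j, |E i j|, ?_⟩
  rintro r ⟨x, -, y, -, hx, hy, rfl⟩
  calc |x ⬝ᵥ E *ᵥ y| = |∑ i, ∑ j, x i * E i j * y j| := by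
        simp only [dotProduct, mulVec, Finset.mul_sum, mul_assoc]
    _ ≤ ∑ i, ∑ j, |x i * E i j * y j| :=
        (Finset.abs_sum_le_sum_abs _ _).trans
          (Finset.sum_le_sum fun i _ => Finset.abs_sum_le_sum_abs _ _)
    _ ≤ ∑ i, ∑ j, |E i j| := by
        refine Finset.sum_le_sum fun i _ => Finset.sum_le_sum fun j _ => ?_
        calc |x i * E i j * y j| ≤ 1 * |E i j| * 1 := by
              rw [abs_mul, abs_mul]
              gcongr
              exacts [abs_apply_le_one hx i, abs_apply_le_one hy j]
          _ = |E i j| := by ring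

variable {C : Set (Fin p → ℝ)} (E : Matrix (Fin p) (Fin p) ℝ)

lemma abs_dotProduct_mulVec_le_coneNorm {x y : Fin p → ℝ} (hx : x ∈ C) (hy : y ∈ C)
    (hx1 : vecEnorm x = 1) (hy1 : vecEnorm y = 1) : |x ⬝ᵥ E *ᵥ y| ≤ coneNorm C E :=
  le_csSup (bddAbove_coneNorm_set C E) ⟨x, hx, y, hy, hx1, hy1, rfl⟩

lemma coneNorm_nonneg {x : Fin p → ℝ} (hx : x ∈ C) (hx1 : vecEnorm x = 1) : 0 ≤ coneNorm C E :=
  (abs_nonneg _).trans (abs_dotProduct_mulVec_le_coneNorm E hx hx hx1 hx1)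

lemma abs_dotProduct_mulVec_le_vecEnorm_mul_coneNorm (hC : ∀ t : ℝ, 0 ≤ t → ∀ x ∈ C, t • x ∈ C)
    {a b : Fin p → ℝ} (ha : a ∈ C) (hb : b ∈ C) :
    |a ⬝ᵥ E *ᵥ b| ≤ vecEnorm a * vecEnorm b * coneNorm C E := by
  rcases eq_or_ne a 0 with rfl | ha0
  · simp
  rcases eq_or_ne b 0 with rfl | hb0
  · simp
  have hunit := abs_dotProduct_mulVec_le_coneNorm E
    (hC _ (inv_nonneg.2 (vecEnorm_nonneg a)) a ha) (hC _ (inv_nonneg.2 (vecEnorm_nonneg b)) b hb)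
    (vecEnorm_inv_smul_self ha0) (vecEnorm_inv_smul_self hb0)
  have hab := mul_nonneg (vecEnorm_nonneg a) (vecEnorm_nonneg b)
  calc |a ⬝ᵥ E *ᵥ b|
      = |(vecEnorm a • (vecEnorm a)⁻¹ • a) ⬝ᵥ E *ᵥ (vecEnorm b • (vecEnorm b)⁻¹ • b)| := by
        rw [vecEnorm_smul_inv_smul_self, vecEnorm_smul_inv_smul_self]
    _ = vecEnorm a * vecEnorm b * |((vecEnorm a)⁻¹ • a) ⬝ᵥ E *ᵥ ((vecEnorm b)⁻¹ • b)| := by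
        rw [smul_dotProduct_mulVec_smul, abs_mul, abs_of_nonneg hab]
    _ ≤ vecEnorm a * vecEnorm b * coneNorm C E := mul_le_mul_of_nonneg_left hunit hab

end ConeNorm

section TangentCone

variable {p : ℕ} {K : Set (Fin p → ℝ)} {x : Fin p → ℝ}

lemma smul_mem_tangentCone {t : ℝ} (ht : 0 ≤ t) {w : Fin p → ℝ} (hw : w ∈ tangentCone K x) :
    t • w ∈ tangentCone K x := by
  obtain ⟨s, hs, u, hu, rfl⟩ := hw
  exact ⟨t * s, mul_nonneg ht hs, u, hu, smul_smul t s _⟩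

lemma sub_mem_tangentCone {v : Fin p → ℝ} (hv : v ∈ K) : v - x ∈ tangentCone K x :=
  ⟨1, zero_le_one, v, hv, (one_smul ℝ _).symm⟩

lemma ConvexCone.mem_tangentCone_self {K : ConvexCone ℝ (Fin p → ℝ)} (hx : x ∈ K) :
    x ∈ tangentCone (K : Set (Fin p → ℝ)) x := by
  convert sub_mem_tangentCone (x := x) (K.smul_mem two_pos hx) using 1
  rw [two_smul, add_sub_cancel_right]

end TangentCone

section Eigengap

variable {p : ℕ} {A : Matrix (Fin p) (Fin p) ℝ} {x : Fin p → ℝ} {mu : ℝ}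

lemma dotProduct_mulVec_le_of_dotProduct_eq_zero
    (hmu : ∀ y : Fin p → ℝ, vecEnorm y = 1 → y ⬝ᵥ x = 0 → y ⬝ᵥ A *ᵥ y ≤ mu)
    {w : Fin p → ℝ} (hw : w ⬝ᵥ x = 0) : w ⬝ᵥ A *ᵥ w ≤ mu * (w ⬝ᵥ w) := by
  rcases eq_or_ne w 0 with rfl | hw0
  · simp
  set u := (vecEnorm w)⁻¹ • w
  have hu : u ⬝ᵥ A *ᵥ u ≤ mu :=
    hmu u (vecEnorm_inv_smul_self hw0) (by rw [smul_dotProduct, hw, smul_zero])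
  calc w ⬝ᵥ A *ᵥ w = (vecEnorm w • u) ⬝ᵥ A *ᵥ (vecEnorm w • u) := by
        rw [vecEnorm_smul_inv_smul_self]
    _ = vecEnorm w ^ 2 * (u ⬝ᵥ A *ᵥ u) := by rw [smul_dotProduct_mulVec_smul, sq]
    _ ≤ vecEnorm w ^ 2 * mu := by gcongr
    _ = mu * (w ⬝ᵥ w) := by rw [vecEnorm_sq, mul_comm]

lemma dotProduct_mulVec_self_le_of_eigengap {lam : ℝ} (hA : A.IsSymm) (hx : vecEnorm x = 1)
    (heig : A *ᵥ x = lam • x)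
    (hmu : ∀ y : Fin p → ℝ, vecEnorm y = 1 → y ⬝ᵥ x = 0 → y ⬝ᵥ A *ᵥ y ≤ mu)
    {v : Fin p → ℝ} (hv : vecEnorm v = 1) :
    v ⬝ᵥ A *ᵥ v ≤ lam - (lam - mu) * (1 - (v ⬝ᵥ x) ^ 2) := by
  set c := v ⬝ᵥ x
  set w := v - c • x with hw
  have hx1 := dotProduct_self_eq_one hx
  have hwx : w ⬝ᵥ x = 0 := by
    rw [hw, sub_dotProduct, smul_dotProduct, hx1, smul_eq_mul, mul_one, sub_self]
  have hww : w ⬝ᵥ w = 1 - c ^ 2 := by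
    simp only [hw, sub_dotProduct, dotProduct_sub, smul_dotProduct, dotProduct_smul, smul_eq_mul,
      dotProduct_self_eq_one hv, hx1, dotProduct_comm x v, c]
    ring
  have hAx : ∀ y, y ⬝ᵥ A *ᵥ x = lam * (y ⬝ᵥ x) := fun y => by
    rw [heig, dotProduct_smul, smul_eq_mul]
  have hsplit : v ⬝ᵥ A *ᵥ v = c ^ 2 * lam + w ⬝ᵥ A *ᵥ w := by
    have hv_eq : v = c • x + w := by rw [hw, add_sub_cancel]
    rw [hv_eq]
    simp only [mulVec_add, mulVec_smul, add_dotProduct, dotProduct_add, smul_dotProduct,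
      dotProduct_smul, smul_eq_mul, hA.dotProduct_mulVec_comm x w, hAx, hwx, hx1]
    ring
  have hwAw := dotProduct_mulVec_le_of_dotProduct_eq_zero hmu hwx
  rw [hww] at hwAw
  rw [hsplit]
  linarith

end Eigengap

section Perturbation

variable {p : ℕ} (E : Matrix (Fin p) (Fin p) ℝ) {v x : Fin p → ℝ}

lemma dotProduct_mulVec_sub_le_two_mul_coneNorm {C : Set (Fin p → ℝ)} (hvC : v ∈ C) (hxC : x ∈ C)
    (hv : vecEnorm v = 1) (hx : vecEnorm x = 1) :
    v ⬝ᵥ E *ᵥ v - x ⬝ᵥ E *ᵥ x ≤ 2 * coneNorm C E := by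
  have hvv := abs_le.1 (abs_dotProduct_mulVec_le_coneNorm E hvC hvC hv hv)
  have hxx := abs_le.1 (abs_dotProduct_mulVec_le_coneNorm E hxC hxC hx hx)
  linarith [hvv.2, hxx.1]

lemma dotProduct_mulVec_sub_le_four_mul_vecEnorm_sub_mul_coneNorm {K : ConvexCone ℝ (Fin p → ℝ)}
    (hvK : v ∈ K) (hxK : x ∈ K) (hx : vecEnorm x = 1) (hvx : vecEnorm (v - x) ≤ 2) :
    v ⬝ᵥ E *ᵥ v - x ⬝ᵥ E *ᵥ x ≤
      4 * vecEnorm (v - x) * coneNorm (tangentCone (K : Set (Fin p → ℝ)) x) E := by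
  set T := tangentCone (K : Set (Fin p → ℝ)) x
  set d := v - x with hd
  have hT : ∀ t : ℝ, 0 ≤ t → ∀ y ∈ T, t • y ∈ T := fun t ht y hy => smul_mem_tangentCone ht hy
  have hdT : d ∈ T := sub_mem_tangentCone hvK
  have hxT : x ∈ T := K.mem_tangentCone_self hxK
  have hdd := abs_le.1 (abs_dotProduct_mulVec_le_vecEnorm_mul_coneNorm E hT hdT hdT)
  have hdx := abs_le.1 (abs_dotProduct_mulVec_le_vecEnorm_mul_coneNorm E hT hdT hxT)
  have hxd := abs_le.1 (abs_dotProduct_mulVec_le_vecEnorm_mul_coneNorm E hT hxT hdT)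
  have hexpand : v ⬝ᵥ E *ᵥ v - x ⬝ᵥ E *ᵥ x = d ⬝ᵥ E *ᵥ d + d ⬝ᵥ E *ᵥ x + x ⬝ᵥ E *ᵥ d := by
    simp only [hd, mulVec_sub, dotProduct_sub, sub_dotProduct]
    ring
  rw [hx] at hdx hxd
  have hN := coneNorm_nonneg E hxT hx
  rw [hexpand]
  nlinarith [vecEnorm_nonneg d]

end Perturbation

/-- Error bound for the idealized estimator `v ∈ argmax_{u ∈ K ∩ S} uᵀ A u` with
`A = Ā + E`, when `vᵀ x̄ ≥ 0`:
`‖v - x̄‖ ≤ min( √(4‖E‖_K/ν), 8‖E‖_{T_K(x̄)}/ν )` where `ν = λ - μ`. -/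
theorem idealized_estimator_error_pos {p : ℕ}
    (K : ConvexCone ℝ (Fin p → ℝ))
    (Abar E A : Matrix (Fin p) (Fin p) ℝ) (hAbar : Abar.PosSemidef)
    (hAdef : A = Abar + E)
    (lam mu : ℝ) (xbar : Fin p → ℝ)
    (hxbarK : xbar ∈ K) (hxbar : vecEnorm xbar = 1)
    (heig : Abar.mulVec xbar = lam • xbar)
    (hml : mu < lam)
    (hmu : ∀ y : Fin p → ℝ, vecEnorm y = 1 → y ⬝ᵥ xbar = 0 → y ⬝ᵥ Abar.mulVec y ≤ mu)
    (v : Fin p → ℝ) (hvK : v ∈ K) (hv : vecEnorm v = 1)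
    (hmax : ∀ u ∈ K, vecEnorm u = 1 → u ⬝ᵥ A.mulVec u ≤ v ⬝ᵥ A.mulVec v)
    (halign : 0 ≤ v ⬝ᵥ xbar) :
    vecEnorm (v - xbar) ≤
      min (Real.sqrt (4 * coneNorm (K : Set (Fin p → ℝ)) E / (lam - mu)))
        (8 * coneNorm (tangentCone (K : Set (Fin p → ℝ)) xbar) E / (lam - mu)) := by
  have hν : 0 < lam - mu := sub_pos.2 hml
  have hgap : (lam - mu) / 2 * vecEnorm (v - xbar) ^ 2 ≤
      v ⬝ᵥ E *ᵥ v - xbar ⬝ᵥ E *ᵥ xbar := by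
    have hopt := hmax xbar hxbarK hxbar
    have hcurv := dotProduct_mulVec_self_le_of_eigengap
      (isHermitian_iff_isSymm.1 hAbar.1) hxbar heig hmu hv
    have hsq := vecEnorm_sub_sq_le hv hxbar halign
    have hxAx : xbar ⬝ᵥ Abar *ᵥ xbar = lam := by
      rw [heig, dotProduct_smul, dotProduct_self_eq_one hxbar, smul_eq_mul, mul_one]
    rw [hAdef, add_mulVec, add_mulVec, dotProduct_add, dotProduct_add, hxAx] at hopt
    nlinarith
  have hd_le_two : vecEnorm (v - xbar) ≤ 2 := by
    nlinarith [vecEnorm_sub_sq_le hv hxbar halign, vecEnorm_nonneg (v - xbar)]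
  refine le_min ?_ ?_
  · refine Real.le_sqrt_of_sq_le ?_
    rw [le_div_iff₀ hν]
    nlinarith [dotProduct_mulVec_sub_le_two_mul_coneNorm E hvK hxbarK hv hxbar]
  · have h := dotProduct_mulVec_sub_le_four_mul_vecEnorm_sub_mul_coneNorm E hvK hxbarK hxbar hd_le_two
    rw [le_div_iff₀ hν]
    nlinarith [vecEnorm_nonneg (v - xbar), coneNorm_nonneg E (K.mem_tangentCone_self hxbarK) hxbar]
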